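/- arXiv:2408.01477 — 4 statements merged into one kernel-verified Lean document; each statement's English description precedes it below -/
import Mathlib

section
/- Let n ≥ 2 and let f : F_2^n → F_2 be defined by f(x) = 1 if the Hamming weight of x is 0 or 1, and f(x) = 0 otherwise. Then for every (n−1)-dimensional flat A of F_2^n, the restriction of f to A has algebraic degree at least n−2. -/
open scoped Classical

noncomputable section

/-- Boolean functions in `n` variables. -/
abbrev BF (n : ℕ) := (Fin n → ZMod 2) → ZMod 2

/-- `A` is a `k`-dimensional flat (coset of a `k`-dimensional linear subspace) of `𝔽₂ⁿ`. -/
def IsFlat {n : ℕ} (A : Set (Fin n → ZMod 2)) (k : ℕ) : Prop :=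
  ∃ (W : Submodule (ZMod 2) (Fin n → ZMod 2)) (v : Fin n → ZMod 2),
    Module.finrank (ZMod 2) W = k ∧ A = (fun w => v + w) '' (W : Set (Fin n → ZMod 2))

/-- The sum (parity) of `f` over a subset of `𝔽₂ⁿ`. -/
def flatSum {n : ℕ} (f : BF n) (A : Set (Fin n → ZMod 2)) : ZMod 2 :=
  ∑ x ∈ A.toFinite.toFinset, f x

/-- The restriction of `f` to `A` has algebraic degree at most `d`:
by the standard parity criterion, this holds iff the sum of `f` over every
`(d+1)`-dimensional flat contained in `A` vanishes. -/
def DegLE {n : ℕ} (f : BF n) (A : Set (Fin n → ZMod 2)) (d : ℕ) : Prop :=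
  ∀ B : Set (Fin n → ZMod 2), IsFlat B (d + 1) → B ⊆ A → flatSum f B = 0

/-- The algebraic degree of the restriction of `f` to `A`. -/
def degOn {n : ℕ} (f : BF n) (A : Set (Fin n → ZMod 2)) : ℕ :=
  sInf {d | DegLE f A d}

/-- `α(f, k)`: the minimal algebraic degree of `f` restricted to a `k`-dimensional flat. -/
def alphaDeg {n : ℕ} (f : BF n) (k : ℕ) : ℕ :=
  sInf {d | ∃ A, IsFlat A k ∧ degOn f A = d}

/-- `g(n, k) = max_f α(f, k)`. -/
def gdeg (n k : ℕ) : ℕ :=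
  sSup {m | ∃ f : BF n, alphaDeg f k = m}

/-- The nonlinearity of the restriction of `f` to `A`: the minimal Hamming distance,
on `A`, from `f` to an affine function. -/
def nlOn {n : ℕ} (f : BF n) (A : Set (Fin n → ZMod 2)) : ℕ :=
  sInf {m | ∃ (a : Fin n → ZMod 2) (c : ZMod 2),
    m = (A.toFinite.toFinset.filter (fun x => f x ≠ (∑ i, a i * x i) + c)).card}

/-! An `(n-1)`-flat is a fibre `{x | φ x = c}` of a linear functional `φ`. It contains a point
`p` of weight at most one (`0` if `c = 0`, otherwise some `eᵢ` with `φ eᵢ = 1`), and a second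
functional `ψ` (the parity, resp. the `i`-th coordinate) makes `p` the only point of weight at
most one in `p + ker ψ`. Hence every flat through `p` inside `p + (ker φ ⊓ ker ψ)`, a space of
dimension at least `n - 2`, meets the support of `f` in the single point `p`: its `f`-sum is `1`,
so the parity criterion for degree `≤ d` fails whenever `d + 1 ≤ n - 2`. -/

open Module LinearMap

theorem Submodule.exists_ker_eq_of_finrank_add_one {K V : Type*} [Field K] [AddCommGroup V]
    [Module K V] [FiniteDimensional K V] {W : Submodule K V}
    (hW : finrank K W + 1 = finrank K V) : ∃ φ : V →ₗ[K] K, ker φ = W := by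
  have hquot : finrank K (V ⧸ W) = finrank K K := by
    have := W.finrank_quotient_add_finrank
    rw [finrank_self]
    omega
  obtain ⟨e⟩ := FiniteDimensional.nonempty_linearEquiv_of_finrank_eq hquot
  exact ⟨e.toLinearMap ∘ₗ W.mkQ, by rw [ker_comp, LinearEquiv.ker, Submodule.comap_bot,
    Submodule.ker_mkQ]⟩

theorem Submodule.exists_le_finrank_eq {K V : Type*} [DivisionRing K] [AddCommGroup V]
    [Module K V] (W : Submodule K V) [FiniteDimensional K W] {m : ℕ} (hm : m ≤ finrank K W) :
    ∃ U ≤ W, finrank K U = m := by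
  obtain ⟨g, hg⟩ := exists_linearIndependent_of_le_finrank hm
  refine ⟨span K (Set.range (W.subtype ∘ g)), ?_, ?_⟩
  · rw [Submodule.span_le]
    rintro _ ⟨i, rfl⟩
    exact (g i).2
  · rw [finrank_span_eq_card (hg.map' W.subtype W.ker_subtype), Fintype.card_fin]

theorem LinearMap.finrank_le_finrank_ker_inf_ker_add_two {K V : Type*} [Field K]
    [AddCommGroup V] [Module K V] [FiniteDimensional K V] (φ ψ : V →ₗ[K] K) :
    finrank K V ≤ finrank K ↥(ker φ ⊓ ker ψ) + 2 := by
  have hrange : finrank K (range (φ.prod ψ)) ≤ 2 := by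
    simpa using Submodule.finrank_le (range (φ.prod ψ))
  have := finrank_range_add_finrank_ker (φ.prod ψ)
  rw [ker_prod] at this
  omega

theorem ZMod.sum_eq_hammingNorm {ι : Type*} [Fintype ι] (u : ι → ZMod 2) :
    ∑ i, u i = (hammingNorm u : ZMod 2) := by
  rw [hammingNorm, ← Finset.sum_filter_ne_zero, Finset.card_eq_sum_ones, Nat.cast_sum]
  refine Finset.sum_congr rfl fun i hi => ?_
  have : ∀ a : ZMod 2, a ≠ 0 → a = 1 := by decide
  simp [this _ (Finset.mem_filter.mp hi).2]

theorem ZMod.eq_zero_of_hammingNorm_le_one_of_sum_eq_zero {ι : Type*} [Fintype ι]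
    {u : ι → ZMod 2} (hu : hammingNorm u ≤ 1) (hsum : ∑ i, u i = 0) : u = 0 := by
  rw [ZMod.sum_eq_hammingNorm] at hsum
  rcases Nat.le_one_iff_eq_zero_or_eq_one.mp hu with h | h
  · exact hammingNorm_eq_zero.mp h
  · rw [h] at hsum
    exact absurd hsum (by decide)

theorem hammingNorm_single_add {ι : Type*} [Fintype ι] [DecidableEq ι] {β : Type*}
    [AddMonoid β] [DecidableEq β] {i : ι} {a : β} (ha : a ≠ 0) {u : ι → β} (hu : u i = 0) :
    hammingNorm (Pi.single i a + u : ι → β) = hammingNorm u + 1 := by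
  have hsupp : Finset.univ.filter (fun j => (Pi.single i a + u : ι → β) j ≠ 0) =
      insert i (Finset.univ.filter fun j => u j ≠ 0) := by
    ext j
    by_cases hj : j = i
    · subst hj; simp [hu, ha]
    · simp [hj]
  rw [hammingNorm, hammingNorm, hsupp, Finset.card_insert_of_notMem (by simp [hu])]

section

variable {n : ℕ}

theorem degLE_of_le (f : BF n) (A : Set (Fin n → ZMod 2)) {d : ℕ} (hd : n ≤ d) :
    DegLE f A d := by
  rintro B ⟨W, v, hW, -⟩ -
  have := W.finrank_le
  rw [finrank_fin_fun] at this
  omega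

theorem flatSum_image_add_eq {f : BF n} {U : Submodule (ZMod 2) (Fin n → ZMod 2)}
    {p : Fin n → ZMod 2} (hU : ∀ u ∈ U, u ≠ 0 → f (p + u) = 0) :
    flatSum f ((fun w => p + w) '' U) = f p := by
  refine Finset.sum_eq_single_of_mem p
    ((Set.Finite.mem_toFinset _).mpr ⟨0, U.zero_mem, add_zero p⟩) ?_
  rintro _ hx hne
  obtain ⟨u, hu, rfl⟩ := (Set.Finite.mem_toFinset _).mp hx
  exact hU u hu (by rintro rfl; exact hne (add_zero p))

theorem finrank_le_degOn {f : BF n} {A : Set (Fin n → ZMod 2)}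
    {K : Submodule (ZMod 2) (Fin n → ZMod 2)} {p : Fin n → ZMod 2}
    (hKA : ∀ u ∈ K, p + u ∈ A) (hp : f p ≠ 0) (hK : ∀ u ∈ K, u ≠ 0 → f (p + u) = 0) :
    finrank (ZMod 2) K ≤ degOn f A := by
  refine le_csInf ⟨n, degLE_of_le f A le_rfl⟩ fun d hd => ?_
  by_contra! hlt
  obtain ⟨U, hUK, hU⟩ := K.exists_le_finrank_eq hlt
  apply hp
  rw [← flatSum_image_add_eq fun u hu => hK u (hUK hu)]
  exact hd _ ⟨U, p, hU, rfl⟩ (by rintro _ ⟨u, hu, rfl⟩; exact hKA u (hUK hu))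

theorem exists_hammingNorm_le_one_isolated (φ : (Fin n → ZMod 2) →ₗ[ZMod 2] ZMod 2)
    (v : Fin n → ZMod 2) :
    ∃ (p : Fin n → ZMod 2) (ψ : (Fin n → ZMod 2) →ₗ[ZMod 2] ZMod 2),
      φ p = φ v ∧ hammingNorm p ≤ 1 ∧ ∀ u, ψ u = 0 → hammingNorm (p + u) ≤ 1 → u = 0 := by
  by_cases hv : φ v = 0
  · refine ⟨0, ∑ i, proj i, by rw [map_zero, hv], by simp, fun u hu hnorm => ?_⟩
    rw [zero_add] at hnorm
    exact ZMod.eq_zero_of_hammingNorm_le_one_of_sum_eq_zero hnorm (by simpa using hu)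
  · obtain ⟨i, hi⟩ : ∃ i, φ (Pi.single i 1) = φ v := by
      by_contra! h
      have hzero : φ = 0 := (Pi.basisFun (ZMod 2) (Fin n)).ext fun i => by
        have : ∀ a b : ZMod 2, a ≠ b → b ≠ 0 → a = 0 := by decide
        rw [Pi.basisFun_apply, LinearMap.zero_apply]
        exact this _ _ (h i) hv
      exact hv (by rw [hzero, LinearMap.zero_apply])
    have hsingle :=
      hammingNorm_single_add (i := i) (u := (0 : Fin n → ZMod 2)) one_ne_zero (Pi.zero_apply i)
    rw [add_zero, hammingNorm_zero] at hsingle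
    refine ⟨Pi.single i 1, proj i, hi, hsingle.le, fun u hu hnorm => ?_⟩
    rw [hammingNorm_single_add one_ne_zero (show u i = 0 from hu)] at hnorm
    exact hammingNorm_eq_zero.mp (by omega)

end

/-- The indicator of Hamming weight `≤ 1` has degree at least `n - 2` on every
`(n-1)`-dimensional flat. -/
theorem stmt2 {n : ℕ} (hn : 2 ≤ n)
    (f : BF n)
    (hf : ∀ x, f x = if (Finset.univ.filter fun i => x i ≠ 0).card ≤ 1 then 1 else 0)
    (A : Set (Fin n → ZMod 2)) (hA : IsFlat A (n - 1)) :
    n - 2 ≤ degOn f A := by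
  obtain ⟨W, v, hW, rfl⟩ := hA
  obtain ⟨φ, rfl⟩ := W.exists_ker_eq_of_finrank_add_one (by rw [hW, finrank_fin_fun]; omega)
  obtain ⟨p, ψ, hpv, hp, hiso⟩ := exists_hammingNorm_le_one_isolated φ v
  have hf' : ∀ x, f x = if hammingNorm x ≤ 1 then 1 else 0 := hf
  have hdim := finrank_le_finrank_ker_inf_ker_add_two φ ψ
  rw [finrank_fin_fun] at hdim
  calc n - 2 ≤ finrank (ZMod 2) ↥(ker φ ⊓ ker ψ) := by omega
    _ ≤ degOn f _ := by
      refine finrank_le_degOn (p := p) (fun u hu => ⟨p - v + u, ?_, ?_⟩) ?_ fun u hu hu0 => ?_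
      · rw [SetLike.mem_coe, mem_ker, map_add, map_sub, hpv, sub_self, zero_add]
        exact hu.1
      · simp only [← add_assoc, add_sub_cancel]
      · rw [hf', if_pos hp]
        decide
      · rw [hf', if_neg fun h => hu0 (hiso u hu.2 h)]
end
end

section
/- For n ≥ 2, g(n, n−1) = n−2, where g(n,k) is the maximum over Boolean functions f in n variables of the minimum algebraic degree of f restricted to a k-dimensional flat of F_2^n. -/
/-!
For linear forms `φ, ψ`, every point lies in an even number of the three hyperplanes
`φ = 1`, `ψ = 1`, `φ + ψ = 1`, so every `f` has even sum over one of them; such a hyperplane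
contains no other `(n-1)`-flat, hence `f` has degree at most `n - 2` on it.

Conversely, let `f` be the indicator of the simplex vertices `0, e₁, …, eₙ`. Every hyperplane
`φ = ε` contains a codimension-two flat `φ = ε, x_j = δ` meeting these vertices in exactly one
point, so the sum of `f` over it is odd and the degree of `f` on the hyperplane is at least
`n - 2`. This needs the parity criterion to be monotone in the degree, which holds because a
`(d+1)`-flat is the disjoint union of two `d`-flats.
-/

open scoped Classical

noncomputable section

lemma ZMod.two_eq_zero_or_one : ∀ a : ZMod 2, a = 0 ∨ a = 1 := by decide

lemma mem_image_add_left_iff_mkQ_eq {R M : Type*} [Ring R] [AddCommGroup M] [Module R M]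
    (W : Submodule R M) (v x : M) :
    x ∈ (fun w => v + w) '' (W : Set M) ↔ W.mkQ x = W.mkQ v := by
  rw [Set.image_add_left, Set.mem_preimage, SetLike.mem_coe, Submodule.mkQ_apply,
    Submodule.mkQ_apply, Submodule.Quotient.eq, neg_add_eq_sub]

lemma exists_apply_eq_one_apply_eq_zero {V : Type*} [AddCommGroup V] [Module (ZMod 2) V]
    {φ ψ : V →ₗ[ZMod 2] ZMod 2} (hφ : φ ≠ 0) (h : φ ≠ ψ) : ∃ u, φ u = 1 ∧ ψ u = 0 := by
  obtain ⟨a, ha⟩ := DFunLike.ne_iff.mp hφ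
  obtain ⟨b, hb⟩ := DFunLike.ne_iff.mp h
  have key : ∀ p q r s : ZMod 2, p ≠ 0 → r ≠ s →
      (p = 1 ∧ q = 0) ∨ (r = 1 ∧ s = 0) ∨ (p + r = 1 ∧ q + s = 0) := by decide
  rcases key _ (ψ a) _ _ (by simpa using ha) hb with h | h | h
  exacts [⟨a, h⟩, ⟨b, h⟩, ⟨a + b, by simpa using h⟩]

lemma prod_surjective_of_ne {V : Type*} [AddCommGroup V] [Module (ZMod 2) V]
    {φ ψ : V →ₗ[ZMod 2] ZMod 2} (hφ : φ ≠ 0) (hψ : ψ ≠ 0) (h : φ ≠ ψ) :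
    Function.Surjective (φ.prod ψ) := by
  obtain ⟨u, hu⟩ := exists_apply_eq_one_apply_eq_zero hφ h
  obtain ⟨w, hw⟩ := exists_apply_eq_one_apply_eq_zero hψ h.symm
  rintro ⟨c, d⟩
  exact ⟨c • u + d • w, by simp [hu, hw]⟩

section Flats

variable {n : ℕ}

lemma proj_ne_zero (i : Fin n) :
    (LinearMap.proj i : (Fin n → ZMod 2) →ₗ[ZMod 2] ZMod 2) ≠ 0 :=
  DFunLike.ne_iff.mpr ⟨Pi.single i 1, by simp⟩

lemma exists_apply_single_eq_one {φ : (Fin n → ZMod 2) →ₗ[ZMod 2] ZMod 2} (hφ : φ ≠ 0) :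
    ∃ k, φ (Pi.single k 1) = 1 := by
  by_contra! h
  refine hφ ((Pi.basisFun (ZMod 2) (Fin n)).ext fun k => ?_)
  simpa using (ZMod.two_eq_zero_or_one _).resolve_right (h k)

lemma isFlat_setOf_eq {M : Type*} [AddCommGroup M] [Module (ZMod 2) M]
    {L : (Fin n → ZMod 2) →ₗ[ZMod 2] M} (hL : Function.Surjective L) (c : M) :
    IsFlat {x | L x = c} (n - Module.finrank (ZMod 2) M) := by
  obtain ⟨v, rfl⟩ := hL c
  refine ⟨LinearMap.ker L, v, ?_, ?_⟩
  · have := LinearMap.finrank_range_add_finrank_ker L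
    rw [LinearMap.range_eq_top.mpr hL, finrank_top, Module.finrank_fin_fun] at this
    omega
  · ext x
    rw [Set.mem_ofPred_eq, mem_image_add_left_iff_mkQ_eq, Submodule.mkQ_apply,
      Submodule.mkQ_apply, Submodule.Quotient.eq, LinearMap.mem_ker, map_sub, sub_eq_zero]

lemma isFlat_setOf_apply_eq {φ : (Fin n → ZMod 2) →ₗ[ZMod 2] ZMod 2} (hφ : φ ≠ 0)
    (ε : ZMod 2) : IsFlat {x | φ x = ε} (n - 1) := by
  simpa using isFlat_setOf_eq (LinearMap.surjective_of_ne_zero hφ) ε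

lemma isFlat_setOf_apply_eq_and_apply_eq {φ ψ : (Fin n → ZMod 2) →ₗ[ZMod 2] ZMod 2}
    (hφ : φ ≠ 0) (hψ : ψ ≠ 0) (h : φ ≠ ψ) (ε δ : ZMod 2) :
    IsFlat {x | φ x = ε ∧ ψ x = δ} (n - 2) := by
  simpa [Module.finrank_prod, Prod.ext_iff] using
    isFlat_setOf_eq (prod_surjective_of_ne hφ hψ h) (ε, δ)

lemma IsFlat.exists_eq_setOf_apply_eq {A : Set (Fin n → ZMod 2)} (hn : 1 ≤ n)
    (hA : IsFlat A (n - 1)) :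
    ∃ φ : (Fin n → ZMod 2) →ₗ[ZMod 2] ZMod 2, φ ≠ 0 ∧ ∃ ε, A = {x | φ x = ε} := by
  obtain ⟨W, v, hW, rfl⟩ := hA
  have hQ : Module.finrank (ZMod 2) ((Fin n → ZMod 2) ⧸ W) =
      Module.finrank (ZMod 2) (ZMod 2) := by
    have := W.finrank_quotient_add_finrank
    rw [Module.finrank_fin_fun] at this
    rw [Module.finrank_self]
    omega
  let e := LinearEquiv.ofFinrankEq _ _ hQ
  refine ⟨e.toLinearMap ∘ₗ W.mkQ, ?_, e (W.mkQ v), ?_⟩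
  · obtain ⟨x, hx⟩ := (e.surjective.comp W.mkQ_surjective) 1
    exact DFunLike.ne_iff.mpr ⟨x, fun h => one_ne_zero (hx.symm.trans h)⟩
  · ext x
    simp only [mem_image_add_left_iff_mkQ_eq, Set.mem_ofPred_eq, LinearMap.comp_apply,
      LinearEquiv.coe_coe, EmbeddingLike.apply_eq_iff_eq]

lemma IsFlat.ncard_eq {A : Set (Fin n → ZMod 2)} {k : ℕ} (hA : IsFlat A k) :
    A.ncard = 2 ^ k := by
  obtain ⟨W, v, rfl, rfl⟩ := hA
  rw [Set.ncard_image_of_injective _ (add_right_injective v), ← Nat.card_coe_set_eq,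
    SetLike.coe_sort_coe, Module.natCard_eq_pow_finrank (K := ZMod 2), Nat.card_zmod]

lemma IsFlat.le_of_subset {A B : Set (Fin n → ZMod 2)} {j k : ℕ} (hA : IsFlat A k)
    (hB : IsFlat B j) (h : B ⊆ A) : j ≤ k := by
  have := Set.ncard_le_ncard h A.toFinite
  rwa [hA.ncard_eq, hB.ncard_eq, Nat.pow_le_pow_iff_right one_lt_two] at this

lemma IsFlat.eq_of_subset {A B : Set (Fin n → ZMod 2)} {k : ℕ} (hA : IsFlat A k)
    (hB : IsFlat B k) (h : B ⊆ A) : B = A :=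
  Set.eq_of_subset_of_ncard_le h (by rw [hA.ncard_eq, hB.ncard_eq]) A.toFinite

lemma IsFlat.exists_disjoint_union {B : Set (Fin n → ZMod 2)} {d : ℕ} (hB : IsFlat B (d + 1)) :
    ∃ B₁ B₂, IsFlat B₁ d ∧ IsFlat B₂ d ∧ Disjoint B₁ B₂ ∧ B = B₁ ∪ B₂ := by
  obtain ⟨W, v, hW, rfl⟩ := hB
  obtain ⟨u, huW, hu⟩ := Submodule.exists_mem_ne_zero_of_ne_bot (p := W)
    (by rintro rfl; simp at hW)
  obtain ⟨i, hi⟩ : ∃ i, u i = 1 := by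
    obtain ⟨i, hi⟩ := Function.ne_iff.mp hu
    exact ⟨i, (ZMod.two_eq_zero_or_one _).resolve_left hi⟩
  -- `u ∈ W` lets the second coordinate move freely inside a fibre of `W.mkQ`
  let L := W.mkQ.prod (LinearMap.proj i : (Fin n → ZMod 2) →ₗ[ZMod 2] ZMod 2)
  have hL : Function.Surjective L := by
    rintro ⟨a, b⟩
    obtain ⟨y, rfl⟩ := W.mkQ_surjective a
    refine ⟨y + (b - y i) • u, ?_⟩
    simp [L, hi, huW]
  have hd : n - Module.finrank (ZMod 2) (((Fin n → ZMod 2) ⧸ W) × ZMod 2) = d := by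
    have := W.finrank_quotient_add_finrank
    have := W.finrank_le
    rw [Module.finrank_prod, Module.finrank_self]
    rw [Module.finrank_fin_fun] at *
    omega
  refine ⟨{x | L x = (W.mkQ v, 0)}, {x | L x = (W.mkQ v, 1)}, hd ▸ isFlat_setOf_eq hL _,
    hd ▸ isFlat_setOf_eq hL _,
    Set.disjoint_left.mpr fun _ h₁ h₂ => zero_ne_one (congrArg Prod.snd (h₁.symm.trans h₂)), ?_⟩
  ext x
  simp only [mem_image_add_left_iff_mkQ_eq, Set.mem_union, Set.mem_ofPred_eq, L,
    LinearMap.prod_apply, Function.prod, Prod.mk.injEq, ← and_or_left, iff_self_and]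
  exact fun _ => ZMod.two_eq_zero_or_one _

end Flats

section FlatSums

variable {n : ℕ}

lemma flatSum_eq_sum_ite (f : BF n) (A : Set (Fin n → ZMod 2)) :
    flatSum f A = ∑ x, if x ∈ A then f x else 0 := by
  rw [flatSum, ← Finset.sum_filter]
  congr 1
  ext
  simp

lemma flatSum_union (f : BF n) {B₁ B₂ : Set (Fin n → ZMod 2)} (h : Disjoint B₁ B₂) :
    flatSum f (B₁ ∪ B₂) = flatSum f B₁ + flatSum f B₂ := by
  rw [flatSum, Set.Finite.toFinset_union B₁.toFinite B₂.toFinite,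
    Finset.sum_union (Set.Finite.disjoint_toFinset.mpr h), flatSum, flatSum]

lemma flatSum_indicator_eq_one {S B : Set (Fin n → ZMod 2)} {p : Fin n → ZMod 2}
    (hpS : p ∈ S) (hpB : p ∈ B) (h : ∀ x ∈ S, x ∈ B → x = p) :
    flatSum (S.indicator 1) B = 1 := by
  rw [flatSum, Finset.sum_eq_single_of_mem p (by simpa using hpB)]
  · simp [hpS]
  · intro x hxB hxp
    exact Set.indicator_of_notMem (fun hxS => hxp (h x hxS (by simpa using hxB))) _

lemma flatSum_add_flatSum_add_flatSum (f : BF n) (φ ψ : (Fin n → ZMod 2) →ₗ[ZMod 2] ZMod 2) :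
    flatSum f {x | φ x = 1} + flatSum f {x | ψ x = 1} + flatSum f {x | (φ + ψ) x = 1} = 0 := by
  simp only [flatSum_eq_sum_ite, ← Finset.sum_add_distrib]
  refine Finset.sum_eq_zero fun x _ => ?_
  simp only [Set.mem_ofPred_eq, LinearMap.add_apply]
  rcases ZMod.two_eq_zero_or_one (φ x) with h₁ | h₁ <;>
    rcases ZMod.two_eq_zero_or_one (ψ x) with h₂ | h₂ <;>
    simp [h₁, h₂, CharTwo.add_self_eq_zero]

lemma exists_isFlat_flatSum_eq_zero (hn : 2 ≤ n) (f : BF n) :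
    ∃ A, IsFlat A (n - 1) ∧ flatSum f A = 0 := by
  have := Fin.nontrivial_iff_two_le.mpr hn
  obtain ⟨i, j, hij⟩ := exists_pair_ne (Fin n)
  let φ : (Fin n → ZMod 2) →ₗ[ZMod 2] ZMod 2 := LinearMap.proj i
  let ψ : (Fin n → ZMod 2) →ₗ[ZMod 2] ZMod 2 := LinearMap.proj j
  have hφψ : φ + ψ ≠ 0 := DFunLike.ne_iff.mpr ⟨Pi.single i 1, by simp [φ, ψ, hij.symm]⟩
  by_contra! h
  have h₁ : ∀ χ : (Fin n → ZMod 2) →ₗ[ZMod 2] ZMod 2, χ ≠ 0 → flatSum f {x | χ x = 1} = 1 :=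
    fun χ hχ => (ZMod.two_eq_zero_or_one _).resolve_left (h _ (isFlat_setOf_apply_eq hχ 1))
  have := flatSum_add_flatSum_add_flatSum f φ ψ
  rw [h₁ φ (proj_ne_zero i), h₁ ψ (proj_ne_zero j), h₁ _ hφψ] at this
  exact absurd this (by decide)

end FlatSums

section Degree

variable {n : ℕ} {f : BF n} {A : Set (Fin n → ZMod 2)}

lemma DegLE.mono {d e : ℕ} (h : DegLE f A d) (hde : d ≤ e) : DegLE f A e := by
  induction e, hde using Nat.le_induction with
  | base => exact h
  | succ e _ ih =>
    intro B hB hBA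
    obtain ⟨B₁, B₂, h₁, h₂, hdisj, rfl⟩ := hB.exists_disjoint_union
    rw [flatSum_union f hdisj, ih B₁ h₁ (Set.subset_union_left.trans hBA),
      ih B₂ h₂ (Set.subset_union_right.trans hBA), add_zero]

lemma degLE_of_isFlat {k d : ℕ} (hA : IsFlat A k) (hkd : k ≤ d) : DegLE f A d :=
  fun _ hB hBA => absurd (hA.le_of_subset hB hBA) (by omega)

lemma degLE_of_flatSum_eq_zero {d : ℕ} (hA : IsFlat A (d + 1)) (h : flatSum f A = 0) :
    DegLE f A d :=
  fun _ hB hBA => hA.eq_of_subset hB hBA ▸ h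

lemma alphaDeg_le (hn : 2 ≤ n) (f : BF n) : alphaDeg f (n - 1) ≤ n - 2 := by
  obtain ⟨A, hA, h⟩ := exists_isFlat_flatSum_eq_zero hn f
  have hA' : IsFlat A (n - 2 + 1) := by rwa [show n - 2 + 1 = n - 1 by omega]
  calc alphaDeg f (n - 1) ≤ degOn f A := Nat.sInf_le ⟨A, hA, rfl⟩
    _ ≤ n - 2 := Nat.sInf_le (degLE_of_flatSum_eq_zero hA' h)

end Degree

def simplexVertices (n : ℕ) : Set (Fin n → ZMod 2) :=
  insert 0 (Set.range fun i => Pi.single i 1)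

def simplexIndicator (n : ℕ) : BF n :=
  (simplexVertices n).indicator 1

section SimplexIndicator

variable {n : ℕ}

lemma forall_mem_simplexVertices {P : (Fin n → ZMod 2) → Prop} :
    (∀ x ∈ simplexVertices n, P x) ↔ P 0 ∧ ∀ i, P (Pi.single i 1) := by
  simp [simplexVertices]

lemma exists_coordinate_isolating_simplexVertex (hn : 2 ≤ n)
    {φ : (Fin n → ZMod 2) →ₗ[ZMod 2] ZMod 2} (hφ : φ ≠ 0) (ε : ZMod 2) :
    ∃ (j : Fin n) (δ : ZMod 2) (p : Fin n → ZMod 2), φ ≠ LinearMap.proj j ∧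
      p ∈ simplexVertices n ∧ φ p = ε ∧ p j = δ ∧
      ∀ x ∈ simplexVertices n, φ x = ε → x j = δ → x = p := by
  have := Fin.nontrivial_iff_two_le.mpr hn
  by_cases hsep : ∃ k, φ (Pi.single k 1) = ε ∧ φ ≠ LinearMap.proj k
  · obtain ⟨k, hk, hφk⟩ := hsep
    refine ⟨k, 1, Pi.single k 1, hφk, by simp [simplexVertices], hk, by simp, ?_⟩
    refine forall_mem_simplexVertices.mpr ⟨by simp, fun i _ hi => ?_⟩
    rw [Pi.single_apply, ite_eq_left_iff, not_imp_comm] at hi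
    rw [hi (by decide)]
  push Not at hsep
  rcases ZMod.two_eq_zero_or_one ε with rfl | rfl
  · have hall : ∀ k, φ (Pi.single k 1) = 1 := fun k =>
      (ZMod.two_eq_zero_or_one _).resolve_left fun hk => by simp [hsep k hk] at hk
    obtain ⟨i, j, hij⟩ := exists_pair_ne (Fin n)
    refine ⟨i, 0, 0, fun h => ?_, by simp [simplexVertices], by simp, rfl, ?_⟩
    · simpa [h, hij.symm] using hall j
    · exact forall_mem_simplexVertices.mpr ⟨fun _ _ => rfl, fun k hk => by simp [hall k] at hk⟩
  · obtain ⟨k, hk⟩ := exists_apply_single_eq_one hφ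
    obtain rfl := hsep k hk
    obtain ⟨j, hjk⟩ := exists_ne k
    refine ⟨j, 0, Pi.single k 1, fun h => ?_, by simp [simplexVertices], hk, by simp [hjk], ?_⟩
    · simpa [hjk] using congrArg (fun χ => χ (Pi.single k 1)) h
    · refine forall_mem_simplexVertices.mpr ⟨by simp, fun i hi _ => ?_⟩
      rw [LinearMap.proj_apply, Pi.single_apply, ite_eq_left_iff, not_imp_comm] at hi
      rw [hi (by decide)]

lemma exists_isFlat_subset_flatSum_simplexIndicator_eq_one (hn : 2 ≤ n)
    {φ : (Fin n → ZMod 2) →ₗ[ZMod 2] ZMod 2} (hφ : φ ≠ 0) (ε : ZMod 2) :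
    ∃ B, IsFlat B (n - 2) ∧ B ⊆ {x | φ x = ε} ∧ flatSum (simplexIndicator n) B = 1 := by
  obtain ⟨j, δ, p, hφj, hp, hpφ, hpj, huniq⟩ := exists_coordinate_isolating_simplexVertex hn hφ ε
  refine ⟨{x | φ x = ε ∧ LinearMap.proj j x = δ},
    isFlat_setOf_apply_eq_and_apply_eq hφ (proj_ne_zero j) hφj ε δ, fun _ hx => hx.1, ?_⟩
  exact flatSum_indicator_eq_one hp ⟨hpφ, hpj⟩ fun x hx hxB => huniq x hx hxB.1 hxB.2

lemma le_degOn_simplexIndicator (hn : 2 ≤ n) {A : Set (Fin n → ZMod 2)}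
    (hA : IsFlat A (n - 1)) : n - 2 ≤ degOn (simplexIndicator n) A := by
  refine le_csInf ⟨n - 1, degLE_of_isFlat hA le_rfl⟩ fun d hd => ?_
  by_contra! hlt
  obtain ⟨φ, hφ, ε, rfl⟩ := hA.exists_eq_setOf_apply_eq (by omega)
  obtain ⟨B, hB, hBA, h⟩ := exists_isFlat_subset_flatSum_simplexIndicator_eq_one hn hφ ε
  have hB' : IsFlat B (n - 3 + 1) := by rwa [show n - 3 + 1 = n - 2 by omega]
  have := DegLE.mono hd (show d ≤ n - 3 by omega) B hB' hBA
  exact one_ne_zero (h.symm.trans this)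

lemma alphaDeg_simplexIndicator (hn : 2 ≤ n) :
    alphaDeg (simplexIndicator n) (n - 1) = n - 2 := by
  have hflat := isFlat_setOf_apply_eq (proj_ne_zero (⟨0, by omega⟩ : Fin n)) 0
  refine le_antisymm (alphaDeg_le hn _) (le_csInf ⟨_, _, hflat, rfl⟩ ?_)
  rintro _ ⟨A, hA, rfl⟩
  exact le_degOn_simplexIndicator hn hA

end SimplexIndicator

/-- For `n ≥ 2`, `g(n, n-1) = n - 2`. -/
theorem stmt3 {n : ℕ} (hn : 2 ≤ n) : gdeg n (n - 1) = n - 2 := by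
  refine IsGreatest.csSup_eq ⟨⟨_, alphaDeg_simplexIndicator hn⟩, ?_⟩
  rintro _ ⟨f, rfl⟩
  exact alphaDeg_le hn f
end
end

section
/- Let a, b, c be nonnegative integers with max(a+1, b) ≤ c ≤ a+b. Then the ceiling of 2^a · (2^b − 1)/(2^c − 1) equals 2^{a+b−c}. -/
open scoped Classical

noncomputable section

/-- If `max(a+1, b) ≤ c ≤ a+b` then `⌈2^a (2^b - 1)/(2^c - 1)⌉ = 2^(a+b-c)`. -/
theorem stmt15 (a b c : ℕ) (h1 : max (a + 1) b ≤ c) (h2 : c ≤ a + b) :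
    ⌈(2 ^ a * (2 ^ b - 1) / (2 ^ c - 1) : ℚ)⌉ = 2 ^ (a + b - c) := by
  have hac : a + 1 ≤ c := le_trans (le_max_left _ _) h1
  have hbc : b ≤ c := le_trans (le_max_right _ _) h1
  set d := a + b - c with hd
  have hdc : d + c = a + b := by omega
  have hda : d ≤ a := by omega
  have hcpos : (0:ℚ) < 2 ^ c - 1 := by
    have : (1:ℚ) < 2 ^ c := by
      apply one_lt_pow₀ (by norm_num) (by omega)
    linarith
  have hpow : (2:ℚ) ^ d * 2 ^ c = 2 ^ a * 2 ^ b := by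
    rw [← pow_add, ← pow_add, hdc]
  have hda' : (2:ℚ) ^ d ≤ 2 ^ a := pow_le_pow_right₀ (by norm_num) hda
  have hac' : (2:ℚ) ^ (a+1) ≤ 2 ^ c := pow_le_pow_right₀ (by norm_num) hac
  have h2a : (2:ℚ) ^ a * 2 ≤ 2 ^ c := by rw [pow_succ] at hac'; exact hac'
  rw [Int.ceil_eq_iff]
  constructor
  · rw [lt_div_iff₀ hcpos]
    push_cast
    nlinarith [pow_pos (by norm_num : (0:ℚ) < 2) a, one_le_pow₀ (by norm_num : (1:ℚ) ≤ 2) (n := d)]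
  · rw [div_le_iff₀ hcpos]
    push_cast
    nlinarith [pow_pos (by norm_num : (0:ℚ) < 2) a, pow_pos (by norm_num : (0:ℚ) < 2) d]
end
end

section
/- Let k ≥ 1 and n = 2^{k−1} + k. Then every Boolean function f : F_2^n → F_2 is constant on some k-dimensional flat of F_2^n; i.e., g(n, k) = 0 for n ≥ 2^{k−1} + k. -/
open scoped Classical

noncomputable section

/-!
Density increment, one dimension at a time.  Call `T ⊆ 𝔽₂ⁿ` a monochromatic coset union for a
subspace `W` if it is a union of cosets of `W` on each of which `f` is constant.  For `a ∉ W`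
the points `x ∈ T` with `x + a ∈ T` and `f (x + a) = f x` form such a union for `W ⊕ ⟨a⟩`.
Summing their number over all `a` counts the monochromatic ordered pairs of `T`, at least
`|T|² / 2` by Cauchy–Schwarz, while each `a ∈ W` contributes exactly `|T|`; so some `a ∉ W`
keeps at least `(|T|² / 2 - |W| |T|) / 2ⁿ` points.  Starting from `T = 𝔽₂ⁿ`, `W = 0`, after `j`
steps `|T| + 2^j ≥ 2^(n + 1 - 2^j)`; for `j = k - 1` this leaves more than `2^k` points, and the
same count shows one further step still leaves a point, whose coset of the new `k`-dimensional
subspace is a monochromatic `k`-flat.  Such a flat has degree `0`, since `f` sums to `0` over each of its lines.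
-/

open Finset Module

section MonochromaticCosets

variable {V β : Type*} [AddCommGroup V]

def monoShift (f : V → β) (T : Finset V) (a : V) : Finset V :=
  {x ∈ T | x + a ∈ T ∧ f (x + a) = f x}

theorem sum_card_monoShift [Fintype V] (f : V → β) (T : Finset V) :
    ∑ a, #(monoShift f T a) = ∑ x ∈ T, #{y ∈ T | f y = f x} := by
  simp only [monoShift, card_filter]
  rw [sum_comm]
  refine sum_congr rfl fun x _ => ?_
  rw [Fintype.sum_equiv (Equiv.addLeft x) (fun a => if x + a ∈ T ∧ f (x + a) = f x then 1 else 0)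
    (fun y => if y ∈ T ∧ f y = f x then 1 else 0) fun _ => rfl, ← sum_filter, ← sum_filter,
    ← filter_filter, filter_mem_eq_inter, univ_inter]

theorem sq_card_le_card_mul_sum_card_monoShift [Fintype V] [Fintype β] (f : V → β)
    (T : Finset V) : #T ^ 2 ≤ Fintype.card β * ∑ a, #(monoShift f T a) := by
  rw [sum_card_monoShift, ← sum_fiberwise' T f fun c : β => #{y ∈ T | f y = c},
    card_eq_sum_card_fiberwise (f := f) (t := univ) fun _ _ => mem_univ _]
  simp only [sum_const, smul_eq_mul, ← sq]
  exact sq_sum_le_card_mul_sum_sq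

variable [Module (ZMod 2) V]

def IsMonoCosetUnion (f : V → β) (W : Submodule (ZMod 2) V) (T : Finset V) : Prop :=
  ∀ x ∈ T, ∀ w ∈ W, x + w ∈ T ∧ f (x + w) = f x

namespace IsMonoCosetUnion

variable {f : V → β} {W : Submodule (ZMod 2) V} {T : Finset V}

theorem monoShift_eq_self (h : IsMonoCosetUnion f W T) {a : V} (ha : a ∈ W) :
    monoShift f T a = T :=
  filter_true_of_mem fun x hx => h x hx a ha

theorem sup_span_singleton (h : IsMonoCosetUnion f W T) (a : V) :
    IsMonoCosetUnion f (W ⊔ Submodule.span (ZMod 2) {a}) (monoShift f T a) := by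
  intro x hx
  obtain ⟨hxT, haT, hfa⟩ := mem_filter.1 hx
  have coset : ∀ w ∈ W ⊔ Submodule.span (ZMod 2) {a}, x + w ∈ T ∧ f (x + w) = f x := by
    intro w hw
    obtain ⟨u, hu, z, hz, rfl⟩ := Submodule.mem_sup.1 hw
    obtain ⟨c, rfl⟩ := Submodule.mem_span_singleton.1 hz
    obtain rfl | rfl : c = 0 ∨ c = 1 := (by decide : ∀ c : ZMod 2, c = 0 ∨ c = 1) c
    · simpa using h x hxT u hu
    · rw [one_smul, add_comm u, ← add_assoc, ← hfa]
      exact h (x + a) haT u hu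
  intro w hw
  have hwa : w + a ∈ W ⊔ Submodule.span (ZMod 2) {a} :=
    add_mem hw (Submodule.mem_sup_right (Submodule.mem_span_singleton_self a))
  obtain ⟨hwT, hfw⟩ := coset w hw
  obtain ⟨hwaT, hfwa⟩ := coset (w + a) hwa
  rw [← add_assoc] at hwaT hfwa
  exact ⟨mem_filter.2 ⟨hwT, hwaT, hfwa.trans hfw.symm⟩, hfw⟩

theorem exists_sq_card_le [Fintype V] [Fintype β] (h : IsMonoCosetUnion f W T) (hW : W ≠ ⊤) :
    ∃ a ∉ W, #T ^ 2 ≤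
      Fintype.card β * (Fintype.card V * #(monoShift f T a) + Fintype.card W * #T) := by
  set S : Finset V := (W : Set V).toFinset
  have hSne : Sᶜ.Nonempty := by
    obtain ⟨a, -, ha⟩ := SetLike.exists_of_lt hW.lt_top
    exact ⟨a, by simpa [S] using ha⟩
  obtain ⟨a, ha, hmax⟩ := exists_max_image Sᶜ (fun a => #(monoShift f T a)) hSne
  refine ⟨a, by simpa [S] using ha, ?_⟩
  have hS : ∑ b ∈ S, #(monoShift f T b) = Fintype.card W * #T := by
    rw [sum_congr rfl fun b hb => by rw [h.monoShift_eq_self (by simpa [S] using hb)], sum_const,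
      smul_eq_mul, Set.toFinset_card]
    rfl
  have hSc : ∑ b ∈ Sᶜ, #(monoShift f T b) ≤ Fintype.card V * #(monoShift f T a) :=
    (sum_le_card_nsmul _ _ _ hmax).trans (Nat.mul_le_mul_right _ (card_le_univ _))
  calc #T ^ 2 ≤ Fintype.card β * ∑ b, #(monoShift f T b) :=
        sq_card_le_card_mul_sum_card_monoShift f T
    _ = Fintype.card β * (∑ b ∈ Sᶜ, #(monoShift f T b) + ∑ b ∈ S, #(monoShift f T b)) := by
        rw [add_comm, sum_add_sum_compl]
    _ ≤ _ := by rw [hS]; gcongr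

end IsMonoCosetUnion

end MonochromaticCosets

/-- One increment in numbers: `J = 2^j`, `P = 2^(2^j)`, `Q = 2^(N+1)`, `M` the current size and
`s` the size after the step, bounded below by averaging as in `exists_sq_card_le`. -/
theorem density_increment {J P Q M s : ℕ} (hJ : 1 ≤ J) (hP : 2 * J ≤ P) (hQ : P * P ≤ Q)
    (hM : Q ≤ (M + J) * P) (hs : M * M ≤ Q * s + 2 * J * M) : Q ≤ (s + 2 * J) * (P * P) := by
  by_contra! hlt
  have h1 : M * M * (P * P) ≤ (Q * s + 2 * J * M) * (P * P) := Nat.mul_le_mul_right _ hs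
  have h2 : (s + 2 * J) * (P * P) * Q < Q * Q := Nat.mul_lt_mul_of_pos_right hlt (by nlinarith)
  have h3 : ((Q : ℤ) - 2 * J * P) ^ 2 ≤ ((M : ℤ) * P - J * P) ^ 2 := by
    have : 2 * J * P ≤ Q := by nlinarith
    apply pow_le_pow_left₀ <;> push_cast [← Nat.cast_le (α := ℤ)] at * <;> nlinarith
  have h4 : J * P * (4 * Q) ≤ J * P * (2 * Q * P) := Nat.mul_le_mul_left _ (by nlinarith)
  zify at h1 h2 h4
  nlinarith [sq_nonneg ((J : ℤ) * P)]

section Iteration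

variable {V : Type*} [AddCommGroup V] [Module (ZMod 2) V] [Fintype V]

/-- The size bound is `#T + 2^j ≥ 2^(N + 1 - 2^j)`, multiplied out to avoid truncated
subtraction. -/
theorem exists_isMonoCosetUnion (f : V → ZMod 2) {j : ℕ}
    (hj : 2 ^ j ≤ finrank (ZMod 2) V + 1) :
    ∃ (W : Submodule (ZMod 2) V) (T : Finset V), finrank (ZMod 2) W = j ∧
      IsMonoCosetUnion f W T ∧ 2 ^ (finrank (ZMod 2) V + 1) ≤ (#T + 2 ^ j) * 2 ^ 2 ^ j := by
  set N := finrank (ZMod 2) V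
  have hcardV : Fintype.card V = 2 ^ N := by rw [card_eq_pow_finrank (K := ZMod 2), ZMod.card]
  induction j with
  | zero =>
    refine ⟨⊥, univ, finrank_bot _ _, fun x _ w hw => ?_, ?_⟩
    · simp [(Submodule.mem_bot _).1 hw]
    · rw [card_univ, hcardV, pow_succ]; gcongr <;> simp
  | succ j ih =>
    have hjN : j < N := by
      have := Nat.lt_two_pow_self (n := j + 1)
      omega
    obtain ⟨W, T, hWj, hT, hsize⟩ := ih (le_trans (Nat.pow_le_pow_right two_pos j.le_succ) hj)
    have hW : W ≠ ⊤ := by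
      rintro rfl
      rw [finrank_top] at hWj
      omega
    obtain ⟨a, ha, hkey⟩ := hT.exists_sq_card_le hW
    refine ⟨_, _, by rw [Submodule.finrank_sup_span_singleton ha, hWj],
      hT.sup_span_singleton a, ?_⟩
    rw [card_eq_pow_finrank (K := ZMod 2) (V := W), ZMod.card, hWj, hcardV] at hkey
    have hP : 2 * 2 ^ j ≤ 2 ^ 2 ^ j := by
      rw [← pow_succ']
      exact Nat.pow_le_pow_right two_pos Nat.lt_two_pow_self
    have hQ : 2 ^ 2 ^ j * 2 ^ 2 ^ j ≤ 2 ^ (N + 1) := by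
      rw [← pow_add, ← two_mul, ← pow_succ']
      exact Nat.pow_le_pow_right two_pos hj
    have hs : #T * #T ≤ 2 ^ (N + 1) * #(monoShift f T a) + 2 * 2 ^ j * #T := by
      rw [pow_succ, ← sq]; linarith
    convert density_increment Nat.one_le_two_pow hP hQ hsize hs using 2
    · ring
    · rw [← pow_add, ← two_mul, ← pow_succ']

theorem exists_submodule_forall_apply_add_eq (f : V → ZMod 2) {k : ℕ}
    (hV : 2 ^ k + k + 1 ≤ finrank (ZMod 2) V) :
    ∃ (W : Submodule (ZMod 2) V) (v : V), finrank (ZMod 2) W = k + 1 ∧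
      ∀ w ∈ W, f (v + w) = f v := by
  set N := finrank (ZMod 2) V
  obtain ⟨W, T, hWk, hT, hsize⟩ := exists_isMonoCosetUnion f (j := k) (by omega)
  have hbig : 2 * 2 ^ k < #T := by
    have : 4 * 2 ^ k * 2 ^ 2 ^ k ≤ 2 ^ (N + 1) := by
      rw [show 4 = 2 ^ 2 from rfl, ← pow_add, ← pow_add]
      exact Nat.pow_le_pow_right two_pos (by omega)
    have := Nat.le_of_mul_le_mul_right (this.trans hsize) (by positivity)
    have := Nat.one_le_two_pow (n := k)
    omega
  have hW : W ≠ ⊤ := by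
    rintro rfl
    rw [finrank_top] at hWk
    omega
  obtain ⟨a, ha, hkey⟩ := hT.exists_sq_card_le hW
  obtain ⟨v, hv⟩ : (monoShift f T a).Nonempty := by
    rw [nonempty_iff_ne_empty]
    intro hempty
    rw [hempty, card_empty, card_eq_pow_finrank (K := ZMod 2) (V := W), ZMod.card, hWk] at hkey
    have : #T * #T ≤ 2 * 2 ^ k * #T := by nlinarith
    exact absurd (Nat.le_of_mul_le_mul_right this (by omega)) (by omega)
  refine ⟨_, v, ?_, fun w hw => (hT.sup_span_singleton a v hv w hw).2⟩
  rw [Submodule.finrank_sup_span_singleton ha, hWk]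

end Iteration

theorem IsFlat.ncard {n k : ℕ} {A : Set (Fin n → ZMod 2)} (hA : IsFlat A k) :
    A.ncard = 2 ^ k := by
  obtain ⟨W, v, hW, rfl⟩ := hA
  rw [Set.ncard_image_of_injective _ (add_right_injective v), ← Nat.card_coe_set_eq,
    SetLike.coe_sort_coe, natCard_eq_pow_finrank (K := ZMod 2), Nat.card_zmod, hW]

theorem flatSum_eq_zero_of_forall_eq {n d : ℕ} {f : BF n} {B : Set (Fin n → ZMod 2)}
    (hB : IsFlat B (d + 1)) {c : ZMod 2} (hc : ∀ x ∈ B, f x = c) : flatSum f B = 0 := by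
  rw [flatSum, sum_congr rfl fun x hx => hc x (B.toFinite.mem_toFinset.1 hx), sum_const,
    ← Set.ncard_eq_toFinset_card, hB.ncard, pow_succ, mul_nsmul', two_nsmul,
    (by decide : ∀ c : ZMod 2, c + c = 0), smul_zero]

theorem degOn_eq_zero_of_forall_eq {n : ℕ} {f : BF n} {A : Set (Fin n → ZMod 2)} {c : ZMod 2}
    (hc : ∀ x ∈ A, f x = c) : degOn f A = 0 :=
  Nat.sInf_eq_zero.2 <| Or.inl fun _ hB hBA =>
    flatSum_eq_zero_of_forall_eq hB fun x hx => hc x (hBA hx)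

/-- For `k ≥ 1` and `n ≥ 2^(k-1) + k`, every Boolean function on `𝔽₂ⁿ` is
constant on some `k`-dimensional flat; i.e. `g(n,k) = 0`. -/
theorem stmt17 {n k : ℕ} (hk : 1 ≤ k) (hn : 2 ^ (k - 1) + k ≤ n) :
    (∀ f : BF n, ∃ A : Set (Fin n → ZMod 2), IsFlat A k ∧
      ∃ c : ZMod 2, ∀ x ∈ A, f x = c) ∧
    gdeg n k = 0 := by
  have mono : ∀ f : BF n, ∃ A : Set (Fin n → ZMod 2), IsFlat A k ∧
      ∃ c : ZMod 2, ∀ x ∈ A, f x = c := by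
    intro f
    obtain ⟨k, rfl⟩ := Nat.exists_eq_add_of_le' hk
    rw [Nat.add_sub_cancel] at hn
    obtain ⟨W, v, hW, hf⟩ :=
      exists_submodule_forall_apply_add_eq f (by rw [finrank_fin_fun]; omega)
    exact ⟨_, ⟨W, v, hW, rfl⟩, f v, by rintro _ ⟨w, hw, rfl⟩; exact hf w hw⟩
  have alpha : ∀ f : BF n, alphaDeg f k = 0 := fun f => by
    obtain ⟨A, hA, c, hc⟩ := mono f
    exact Nat.sInf_eq_zero.2 (Or.inl ⟨A, hA, degOn_eq_zero_of_forall_eq hc⟩)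
  have hrange : {m | ∃ f : BF n, alphaDeg f k = m} = {0} :=
    Set.eq_singleton_iff_unique_mem.2 ⟨⟨0, alpha 0⟩, by rintro _ ⟨f, rfl⟩; exact alpha f⟩
  exact ⟨mono, by rw [gdeg, hrange, csSup_singleton]⟩
end
end
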